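/- arXiv:1508.02430 — 2 statements merged into one kernel-verified Lean document; each statement's English description precedes it below -/
import Mathlib

section
/- The number of morphisms from [m] to [n] in the category of noncommutative finite sets equals the rising factorial n(n+1)(n+2)⋯(n+m−1). Equivalently, the number of pairs (f, orders) where f : Fin m → Fin n is a function and each fiber f⁻¹(j) carries a linear order equals ∏_{i=0}^{m−1} (n+i). -/
/-!
A linear order on a finite set `S` is the same as an enumeration `S ≃ Fin |S|`, so there are
`|S|!` of them and `∑_f ∏_j |f⁻¹ j|!` morphisms `[m] → [n]`. Extending `f : [m] → [n]` by the
value `a` on a new point multiplies the factor of the fiber over `a` by its new size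
`|f⁻¹ a| + 1`; summed over `a` these sizes give `m + n`, which is the recursion of the rising
factorial.
-/

/-- A morphism in the category `N` of noncommutative finite sets from `Fin m` to
`Fin n`: a function together with a linear order on each fiber. -/
def NHom (m n : ℕ) : Type :=
  Σ f : Fin m → Fin n, ∀ j : Fin n,
    { r : {i : Fin m // f i = j} → {i : Fin m // f i = j} → Prop //
      IsLinearOrder {i : Fin m // f i = j} r }

open Function

section LinearOrders

variable {α : Type*}

def linearOrderOfEquivFin {k : ℕ} (e : α ≃ Fin k) : { r : α → α → Prop // IsLinearOrder α r } :=
  ⟨(· ≤ ·) on e, e.injective.isLinearOrder_onFun _⟩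

theorem linearOrderOfEquivFin_injective {k : ℕ} :
    Injective (linearOrderOfEquivFin (α := α) (k := k)) := by
  intro e₁ e₂ h
  have hle : ∀ x y : Fin k, e₂ (e₁.symm x) ≤ e₂ (e₁.symm y) ↔ x ≤ y := fun x y => by
    have := congrFun (congrFun (congrArg Subtype.val h) (e₁.symm x)) (e₁.symm y)
    simpa [linearOrderOfEquivFin, onFun] using this.symm
  -- an order automorphism of `Fin k` is the identity
  have hid : (⟨e₁.symm.trans e₂, hle _ _⟩ : Fin k ≃o Fin k) = OrderIso.refl _ :=
    Subsingleton.elim _ _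
  refine Equiv.ext fun a => ?_
  have h₂ : e₂ (e₁.symm (e₁ a)) = e₁ a := DFunLike.congr_fun hid (e₁ a)
  rwa [Equiv.symm_apply_apply, eq_comm] at h₂

theorem linearOrderOfEquivFin_surjective [Fintype α] {k : ℕ} (hk : Fintype.card α = k) :
    Surjective (linearOrderOfEquivFin (α := α) (k := k)) := by
  rintro ⟨r, hr⟩
  let : LinearOrder α :=
    { le := r
      le_refl := refl_of r
      le_trans := fun _ _ _ => trans_of r
      le_antisymm := fun _ _ => antisymm_of r
      le_total := total_of r
      toDecidableLE := Classical.decRel r }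
  refine ⟨(monoEquivOfFin α hk).symm.toEquiv, Subtype.ext ?_⟩
  funext a b
  exact propext (monoEquivOfFin α hk).symm.le_iff_le

theorem card_isLinearOrder [Finite α] :
    Nat.card { r : α → α → Prop // IsLinearOrder α r } = (Nat.card α).factorial := by
  classical
  have := Fintype.ofFinite α
  rw [← Nat.card_eq_of_bijective _ ⟨linearOrderOfEquivFin_injective,
    linearOrderOfEquivFin_surjective (k := Fintype.card α) rfl⟩, Nat.card_eq_fintype_card,
    Fintype.card_equiv (Fintype.equivFin α), Nat.card_eq_fintype_card]

end LinearOrders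

section Fibers

variable {β : Type*}

theorem sum_card_fiber {α : Type*} [Finite α] [Fintype β] (g : α → β) :
    ∑ b, Nat.card { a // g a = b } = Nat.card α := by
  rw [← Nat.card_sigma, Nat.card_congr (Equiv.sigmaFiberEquiv g)]

theorem card_fiber_cons_self {m : ℕ} (a : β) (g : Fin m → β) :
    Nat.card { i : Fin (m + 1) // (Fin.cons a g : Fin (m + 1) → β) i = a } =
      Nat.card { i // g i = a } + 1 := by
  classical
  simp only [Nat.card_eq_fintype_card, Fintype.card_subtype, Fin.univ_succ, Finset.filter_cons,
    Fin.cons_zero, if_true, Finset.card_cons, Finset.filter_map, Finset.card_map]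
  rfl

theorem card_fiber_cons_of_ne {m : ℕ} {a b : β} (hab : b ≠ a) (g : Fin m → β) :
    Nat.card { i : Fin (m + 1) // (Fin.cons a g : Fin (m + 1) → β) i = b } =
      Nat.card { i // g i = b } := by
  classical
  simp only [Nat.card_eq_fintype_card, Fintype.card_subtype, Fin.univ_succ, Finset.filter_cons,
    Fin.cons_zero, hab.symm, if_false, Finset.filter_map, Finset.card_map]
  rfl

theorem prod_factorial_card_fiber_cons [Fintype β] {m : ℕ} (a : β) (g : Fin m → β) :
    ∏ b, (Nat.card { i : Fin (m + 1) // (Fin.cons a g : Fin (m + 1) → β) i = b }).factorial =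
      (Nat.card { i // g i = a } + 1) * ∏ b, (Nat.card { i // g i = b }).factorial := by
  classical
  rw [Fintype.prod_eq_mul_prod_compl a, Fintype.prod_eq_mul_prod_compl a, card_fiber_cons_self,
    Nat.factorial_succ, mul_assoc]
  congr 2
  refine Finset.prod_congr rfl fun b hb => ?_
  rw [card_fiber_cons_of_ne (by simpa using hb)]

theorem sum_prod_factorial_card_fiber [Fintype β] (m : ℕ) :
    ∑ f : Fin m → β, ∏ b, (Nat.card { i // f i = b }).factorial =
      (Fintype.card β).ascFactorial m := by
  induction m with
  | zero => simp
  | succ m ih =>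
    rw [← (Fin.consEquiv fun _ => β).sum_comp, Fintype.sum_prod_type_right, Nat.ascFactorial_succ,
      ← ih, Finset.mul_sum]
    refine Finset.sum_congr rfl fun g _ => ?_
    simp only [Fin.consEquiv_apply, prod_factorial_card_fiber_cons, ← Finset.sum_mul,
      Finset.sum_add_distrib, sum_card_fiber, Nat.card_eq_fintype_card, Fintype.card_fin,
      Finset.sum_const, Finset.card_univ, smul_eq_mul, mul_one, add_comm m]

end Fibers

/-- the number of morphisms `[m] → [n]` in the category of
noncommutative finite sets is the rising factorial `n(n+1)⋯(n+m−1)`. -/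
theorem stmt_2 (m n : ℕ) :
    Nat.card (NHom m n) = ∏ i ∈ Finset.range m, (n + i) := by
  calc Nat.card (NHom m n)
      = ∑ f : Fin m → Fin n, ∏ j, (Nat.card { i // f i = j }).factorial := by
        rw [NHom, Nat.card_sigma]
        simp only [Nat.card_pi, card_isLinearOrder]
    _ = ∏ i ∈ Finset.range m, (n + i) := by
        rw [sum_prod_factorial_card_fiber, Fintype.card_fin, Nat.ascFactorial_eq_prod_range]
end

section
/- There is a faithful functor ψ from the simplex category Δ to the category of noncommutative finite sets: every weakly monotone map f : [q] → [n] between nonempty finite linear orders has each fiber f⁻¹(j) an interval, which inherits a linear order from [q], and these inherited fiber orders are compatible with composition (the lexicographic composite order on fibers of g ∘ f agrees with the order inherited from the domain). -/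
theorem Monotone.lt_or_eq_and_le_iff {α β : Type*} [LinearOrder α] [PartialOrder β] {f : α → β}
    (hf : Monotone f) {x x' : α} : f x < f x' ∨ (f x = f x' ∧ x ≤ x') ↔ x ≤ x' := by
  refine ⟨?_, fun h => (hf h).lt_or_eq.imp_right fun he => ⟨he, h⟩⟩
  rintro (hlt | ⟨-, hle⟩)
  · exact (hf.reflect_lt hlt).le
  · exact hle

theorem stmt_6_general {q n m : ℕ} (f : Fin (q + 1) → Fin (n + 1))
    (g : Fin (n + 1) → Fin (m + 1)) (hf : Monotone f) :
    -- each fiber of a monotone map is an interval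
    (∀ j : Fin (n + 1), ∀ a b c : Fin (q + 1),
      f a = j → f c = j → a ≤ b → b ≤ c → f b = j) ∧
    -- the lexicographic composite of the inherited fiber orders agrees with the
    -- order inherited from the domain on each fiber of `g ∘ f`
    (∀ z : Fin (m + 1), ∀ x x' : Fin (q + 1),
      g (f x) = z → g (f x') = z →
      (((f x ≤ f x' ∧ f x ≠ f x') ∨ (f x = f x' ∧ x ≤ x')) ↔ x ≤ x')) := by
  refine ⟨fun j a b c ha hc hab hbc => ?_, fun z x x' _ _ => ?_⟩
  · exact (Set.ordConnected_singleton.preimage_mono hf).out ha hc ⟨hab, hbc⟩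
  · rw [← lt_iff_le_and_ne]
    exact hf.lt_or_eq_and_le_iff

/-- every weakly monotone map between nonempty finite linear orders has
interval fibers, which inherit a linear order from the domain, and these inherited
fiber orders are compatible with composition: the lexicographic composite order on
the fibers of `g ∘ f` agrees with the order inherited from the domain.  (This gives
the faithful functor `ψ : Δ → N`; faithfulness is clear since a morphism of `N` is
determined by its underlying map together with the fiber orders.) -/
theorem stmt_6 {q n m : ℕ} (f : Fin (q + 1) → Fin (n + 1))
    (g : Fin (n + 1) → Fin (m + 1)) (hf : Monotone f) (hg : Monotone g) :
    -- each fiber of a monotone map is an interval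
    (∀ j : Fin (n + 1), ∀ a b c : Fin (q + 1),
      f a = j → f c = j → a ≤ b → b ≤ c → f b = j) ∧
    -- the lexicographic composite of the inherited fiber orders agrees with the
    -- order inherited from the domain on each fiber of `g ∘ f`
    (∀ z : Fin (m + 1), ∀ x x' : Fin (q + 1),
      g (f x) = z → g (f x') = z →
      (((f x ≤ f x' ∧ f x ≠ f x') ∨ (f x = f x' ∧ x ≤ x')) ↔ x ≤ x')) :=
  stmt_6_general f g hf
end
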